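/- Mass balance necessary condition: If [u,v] is a solution of the nonlocal stationary problem (GP_φ), then ℛ⁻ ≤ ∫_Ω φ dν ≤ ℛ⁺, where ℛ⁻ := ν(Ω₁)·inf Ran(γ) + ν(Ω₂)·inf Ran(β) and ℛ⁺ := ν(Ω₁)·sup Ran(γ) + ν(Ω₂)·sup Ran(β). -/

import Mathlib

open MeasureTheory
open scoped ENNReal

/-- A monotone graph in ℝ × ℝ, viewed as a set-valued map. -/
def MonotoneGraph (θ : ℝ → Set ℝ) : Prop :=
  ∀ ⦃x y u v : ℝ⦄, u ∈ θ x → v ∈ θ y → 0 ≤ (u - v) * (x - y)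

/-- A maximal monotone graph in ℝ × ℝ. -/
def MaximalMonotoneGraph (θ : ℝ → Set ℝ) : Prop :=
  MonotoneGraph θ ∧
    ∀ θ' : ℝ → Set ℝ, MonotoneGraph θ' → (∀ x, θ x ⊆ θ' x) → ∀ x, θ' x = θ x

/-- The range of a set-valued map, as a subset of `EReal`. -/
def graphRange (θ : ℝ → Set ℝ) : Set EReal :=
  (fun z : ℝ => (z : EReal)) '' {z : ℝ | ∃ s : ℝ, z ∈ θ s}

/-!
Integrating the equation over `Ω`, the nonlocal term drops out: reversibility of `ν` lets one
swap `x` and `y` in `∫∫ a(x, y, u y - u x) dm_x(y) dν(x)`, and antisymmetry of `a` says the swap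
changes its sign. Hence `∫_Ω φ = ∫_{Ω₁} v + ∫_{Ω₂} v`, and `v` takes its values in `Ran γ` on `Ω₁`
and in `Ran β` on `Ω₂`. Since `u` is only given `ν`-a.e., it is first replaced by a measurable
version; the nonlocal term does not notice, because reversibility makes `ν` invariant for `m`, so
`ν`-null sets are `m_x`-null for `ν`-a.e. `x`.
-/

open ProbabilityTheory Function

section MassBalance

variable {X : Type*} [MeasurableSpace X]

lemma coe_toReal_mul_sInf_le_setIntegral {ν : Measure X} {s : Set X} (hs : ν s ≠ ∞)
    {f : X → ℝ} (hf : IntegrableOn f s ν) {S : Set ℝ} (hfS : ∀ᵐ x ∂ν.restrict s, f x ∈ S) :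
    ((ν s).toReal : EReal) * sInf ((↑) '' S) ≤ ((∫ x in s, f x ∂ν : ℝ) : EReal) := by
  rcases eq_or_ne (ν s) 0 with h0 | h0
  · simp [Measure.restrict_eq_zero.mpr h0, h0]
  have hpos : (0 : EReal) < (ν s).toReal := by exact_mod_cast ENNReal.toReal_pos h0 hs
  have := ae_restrict_neBot.2 h0
  obtain ⟨x₀, hx₀⟩ := hfS.exists
  induction hI : sInf (((↑) : ℝ → EReal) '' S) with
  | bot => simp [EReal.mul_bot_of_pos hpos]
  | top => exact absurd (hI ▸ sInf_le (Set.mem_image_of_mem _ hx₀)) (EReal.coe_lt_top _).not_ge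
  | coe r =>
    have hr : ∀ᵐ x ∂ν.restrict s, r ≤ f x := hfS.mono fun x hx =>
      EReal.coe_le_coe_iff.1 (hI ▸ sInf_le (Set.mem_image_of_mem _ hx))
    have := integral_mono_ae (integrableOn_const (C := r) hs) hf hr
    rw [setIntegral_const, smul_eq_mul] at this
    exact_mod_cast this

lemma setIntegral_le_coe_toReal_mul_sSup {ν : Measure X} {s : Set X} (hs : ν s ≠ ∞)
    {f : X → ℝ} (hf : IntegrableOn f s ν) {S : Set ℝ} (hfS : ∀ᵐ x ∂ν.restrict s, f x ∈ S) :
    ((∫ x in s, f x ∂ν : ℝ) : EReal) ≤ ((ν s).toReal : EReal) * sSup ((↑) '' S) := by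
  rcases eq_or_ne (ν s) 0 with h0 | h0
  · simp [Measure.restrict_eq_zero.mpr h0, h0]
  have hpos : (0 : EReal) < (ν s).toReal := by exact_mod_cast ENNReal.toReal_pos h0 hs
  have := ae_restrict_neBot.2 h0
  obtain ⟨x₀, hx₀⟩ := hfS.exists
  induction hI : sSup (((↑) : ℝ → EReal) '' S) with
  | bot => exact absurd (hI ▸ le_sSup (Set.mem_image_of_mem _ hx₀)) (EReal.bot_lt_coe _).not_ge
  | top => simp [EReal.mul_top_of_pos hpos]
  | coe r =>
    have hr : ∀ᵐ x ∂ν.restrict s, f x ≤ r := hfS.mono fun x hx =>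
      EReal.coe_le_coe_iff.1 (hI ▸ le_sSup (Set.mem_image_of_mem _ hx))
    have := integral_mono_ae hf (integrableOn_const (C := r) hs) hr
    rw [setIntegral_const, smul_eq_mul] at this
    exact_mod_cast this

lemma integrable_of_lintegral_ofReal_rpow_lt_top {μ : Measure X} [IsFiniteMeasure μ]
    {f : X → ℝ} {q : ℝ} (hq : 1 ≤ q) (hf : AEStronglyMeasurable f μ)
    (h : ∫⁻ x, ENNReal.ofReal (|f x| ^ q) ∂μ < ∞) : Integrable f μ := by
  have hq0 : ENNReal.ofReal q ≠ 0 := (ENNReal.ofReal_pos.2 (by linarith)).ne'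
  refine MemLp.integrable (q := ENNReal.ofReal q) (by simpa using hq)
    ⟨hf, (eLpNorm_lt_top_iff_lintegral_rpow_enorm_lt_top hq0 ENNReal.ofReal_ne_top).2 ?_⟩
  simpa [ENNReal.toReal_ofReal (by linarith : (0:ℝ) ≤ q), Real.enorm_eq_ofReal_abs,
    ENNReal.ofReal_rpow_of_nonneg (abs_nonneg _) (by linarith : (0:ℝ) ≤ q)] using h

def IsReversible (m : X → Measure X) (ν : Measure X) : Prop :=
  ∀ f : X → X → ℝ≥0∞, Measurable (uncurry f) →
    ∫⁻ x, ∫⁻ y, f x y ∂(m x) ∂ν = ∫⁻ x, ∫⁻ y, f y x ∂(m x) ∂ν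

namespace IsReversible

variable {m : X → Measure X} {ν : Measure X}

lemma restrict (hrev : IsReversible m ν) {Ω : Set X} (hΩ : MeasurableSet Ω) :
    IsReversible (fun x => (m x).restrict Ω) (ν.restrict Ω) := by
  have hind : ∀ f : X → X → ℝ≥0∞, ∫⁻ x in Ω, ∫⁻ y in Ω, f x y ∂(m x) ∂ν
      = ∫⁻ x, ∫⁻ y, (Ω ×ˢ Ω).indicator (uncurry f) (x, y) ∂(m x) ∂ν := by
    intro f
    rw [← lintegral_indicator hΩ]
    refine lintegral_congr fun x => ?_
    by_cases hx : x ∈ Ω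
    · rw [Set.indicator_of_mem hx, ← lintegral_indicator hΩ]
      refine lintegral_congr fun y => ?_
      by_cases hy : y ∈ Ω <;> simp [hx, hy]
    · simp [hx]
  intro f hf
  rw [hind, hind,
    hrev (fun x y => (Ω ×ˢ Ω).indicator (uncurry f) (x, y)) (hf.indicator (hΩ.prod hΩ))]
  refine lintegral_congr fun x => lintegral_congr fun y => ?_
  by_cases hx : x ∈ Ω <;> by_cases hy : y ∈ Ω <;> simp [hx, hy]

lemma lintegral_apply_eq {κ : Kernel X X} [IsMarkovKernel κ] (hrev : IsReversible κ ν)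
    {S : Set X} (hS : MeasurableSet S) : ∫⁻ x, κ x S ∂ν = ν S := by
  have h := hrev (fun _ y => S.indicator 1 y) ((measurable_const.indicator hS).comp measurable_snd)
  simpa [lintegral_indicator_one hS] using h

lemma ae_ae_of_ae {κ : Kernel X X} [IsMarkovKernel κ] (hrev : IsReversible κ ν) {P : X → Prop}
    (h : ∀ᵐ y ∂ν, P y) : ∀ᵐ x ∂ν, ∀ᵐ y ∂κ x, P y := by
  set S := toMeasurable ν {y | ¬P y}
  have hS : MeasurableSet S := measurableSet_toMeasurable _ _
  have hνS : ν S = 0 := by rwa [measure_toMeasurable]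
  have hκS : ∀ᵐ x ∂ν, κ x S = 0 :=
    (lintegral_eq_zero_iff (κ.measurable_coe hS)).1 ((hrev.lintegral_apply_eq hS).trans hνS)
  exact hκS.mono fun x hx => measure_mono_null (subset_toMeasurable _ _) hx

lemma integral_integral_eq_zero_of_antisymm {κ : Kernel X X} [IsSFiniteKernel κ] [SFinite ν]
    (hrev : IsReversible κ ν) {F : X → X → ℝ} (hFm : Measurable (uncurry F))
    (hF : Integrable (uncurry F) (ν ⊗ₘ κ)) (hanti : ∀ᵐ x ∂ν, ∀ᵐ y ∂κ x, F y x = -F x y) :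
    ∫ x, ∫ y, F x y ∂κ x ∂ν = 0 := by
  have hpos : ∫⁻ x, ∫⁻ y, ENNReal.ofReal (F x y) ∂κ x ∂ν
      = ∫⁻ x, ∫⁻ y, ENNReal.ofReal (-F x y) ∂κ x ∂ν := by
    rw [hrev (fun x y => ENNReal.ofReal (F x y)) hFm.ennreal_ofReal]
    refine lintegral_congr_ae (hanti.mono fun x hx => lintegral_congr_ae (hx.mono fun y hy => ?_))
    simp only [hy]
  calc ∫ x, ∫ y, F x y ∂κ x ∂ν = ∫ z, uncurry F z ∂(ν ⊗ₘ κ) := (Measure.integral_compProd hF).symm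
    _ = 0 := by
      rw [integral_eq_lintegral_pos_part_sub_lintegral_neg_part hF,
        Measure.lintegral_compProd hFm.ennreal_ofReal,
        Measure.lintegral_compProd (f := fun z => ENNReal.ofReal (-uncurry F z))
          hFm.neg.ennreal_ofReal]
      simp [hpos]

end IsReversible

noncomputable def nonlocalOp (m : X → Measure X) (Ω : Set X) (a : X → X → ℝ → ℝ) (u : X → ℝ)
    (x : X) : ℝ :=
  ∫ y in Ω, a x y (u y - u x) ∂(m x)

section Nonlocal

variable {κ : Kernel X X} [IsMarkovKernel κ] {ν : Measure X} {Ω : Set X} {a : X → X → ℝ → ℝ}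
  {u u' : X → ℝ} {q : ℝ}

lemma IsReversible.ae_ae_restrict_sub_eq (hrev : IsReversible κ ν) (hΩ : MeasurableSet Ω)
    (huu' : u =ᵐ[ν.restrict Ω] u') :
    ∀ᵐ x ∂ν.restrict Ω, ∀ᵐ y ∂(κ x).restrict Ω, u y - u x = u' y - u' x := by
  have h : ∀ᵐ y ∂ν, y ∈ Ω → u y = u' y := (ae_restrict_iff' hΩ).1 huu'
  filter_upwards [huu', ae_restrict_of_ae (hrev.ae_ae_of_ae h)] with x hx hxy
  filter_upwards [ae_restrict_of_ae hxy, ae_restrict_mem hΩ] with y hy hyΩ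
  rw [hx, hy hyΩ]

lemma IsReversible.nonlocalOp_ae_eq (hrev : IsReversible κ ν) (hΩ : MeasurableSet Ω)
    (huu' : u =ᵐ[ν.restrict Ω] u') :
    nonlocalOp κ Ω a u =ᵐ[ν.restrict Ω] nonlocalOp κ Ω a u' :=
  (hrev.ae_ae_restrict_sub_eq hΩ huu').mono fun _ hx =>
    integral_congr_ae (hx.mono fun y hy => by simp only [hy])

lemma IsReversible.setLIntegral_setLIntegral_sub_congr (hrev : IsReversible κ ν)
    (hΩ : MeasurableSet Ω) (huu' : u =ᵐ[ν.restrict Ω] u') (g : X → X → ℝ → ℝ≥0∞) :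
    ∫⁻ x in Ω, ∫⁻ y in Ω, g x y (u y - u x) ∂κ x ∂ν
      = ∫⁻ x in Ω, ∫⁻ y in Ω, g x y (u' y - u' x) ∂κ x ∂ν :=
  lintegral_congr_ae ((hrev.ae_ae_restrict_sub_eq hΩ huu').mono fun _ hx =>
    lintegral_congr_ae (hx.mono fun y hy => by simp only [hy]))

lemma measurable_uncurry_flux (ha : Measurable fun z : X × X × ℝ => a z.1 z.2.1 z.2.2)
    (hu : Measurable u) : Measurable (uncurry fun x y => a x y (u y - u x)) :=
  ha.comp (measurable_fst.prodMk (measurable_snd.prodMk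
    ((hu.comp measurable_snd).sub (hu.comp measurable_fst))))

lemma integrable_uncurry_compProd_restrict (hΩ : MeasurableSet Ω) (hfin : ν Ω ≠ ∞)
    (ha : Measurable fun z : X × X × ℝ => a z.1 z.2.1 z.2.2) (hu : Measurable u) (hq : 1 ≤ q)
    (hF : ∫⁻ x in Ω, ∫⁻ y in Ω, ENNReal.ofReal (|a x y (u y - u x)| ^ q) ∂κ x ∂ν < ∞) :
    Integrable (uncurry fun x y => a x y (u y - u x)) (ν.restrict Ω ⊗ₘ κ.restrict hΩ) := by
  have : IsFiniteMeasure (ν.restrict Ω) := isFiniteMeasure_restrict.2 hfin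
  have hm := measurable_uncurry_flux ha hu
  refine integrable_of_lintegral_ofReal_rpow_lt_top hq hm.aestronglyMeasurable ?_
  rw [Measure.lintegral_compProd (hm.abs.pow_const q).ennreal_ofReal]
  simpa [Kernel.restrict_apply] using hF

lemma integrable_nonlocalOp_of_measurable (hΩ : MeasurableSet Ω) (hfin : ν Ω ≠ ∞)
    (ha : Measurable fun z : X × X × ℝ => a z.1 z.2.1 z.2.2) (hu : Measurable u) (hq : 1 ≤ q)
    (hF : ∫⁻ x in Ω, ∫⁻ y in Ω, ENNReal.ofReal (|a x y (u y - u x)| ^ q) ∂κ x ∂ν < ∞) :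
    Integrable (nonlocalOp κ Ω a u) (ν.restrict Ω) := by
  have : IsFiniteMeasure (ν.restrict Ω) := isFiniteMeasure_restrict.2 hfin
  have := (integrable_uncurry_compProd_restrict hΩ hfin ha hu hq hF).integral_compProd
  simp only [Kernel.prodMkLeft_apply, Kernel.const_apply, Kernel.restrict_apply,
    uncurry_apply_pair] at this
  exact this

lemma IsReversible.integral_nonlocalOp_eq_zero_of_measurable (hrev : IsReversible κ ν)
    (hΩ : MeasurableSet Ω) (hfin : ν Ω ≠ ∞)
    (ha : Measurable fun z : X × X × ℝ => a z.1 z.2.1 z.2.2)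
    (hanti : ∀ᵐ x ∂ν, ∀ᵐ y ∂κ x, ∀ r : ℝ, a x y r = - a y x (-r)) (hu : Measurable u)
    (hq : 1 ≤ q)
    (hF : ∫⁻ x in Ω, ∫⁻ y in Ω, ENNReal.ofReal (|a x y (u y - u x)| ^ q) ∂κ x ∂ν < ∞) :
    ∫ x in Ω, nonlocalOp κ Ω a u x ∂ν = 0 := by
  have : IsFiniteMeasure (ν.restrict Ω) := isFiniteMeasure_restrict.2 hfin
  have hrevΩ : IsReversible (κ.restrict hΩ) (ν.restrict Ω) := by
    rw [show ⇑(κ.restrict hΩ) = fun x => (κ x).restrict Ω from funext (κ.restrict_apply hΩ)]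
    exact hrev.restrict hΩ
  have hantiΩ : ∀ᵐ x ∂ν.restrict Ω, ∀ᵐ y ∂κ.restrict hΩ x,
      a y x (u x - u y) = -a x y (u y - u x) := by
    filter_upwards [ae_restrict_of_ae hanti] with x hx
    filter_upwards [(κ.restrict_apply hΩ x).symm ▸ ae_restrict_of_ae hx] with y hy
    rw [hy, neg_sub, neg_neg]
  simpa only [nonlocalOp, Kernel.restrict_apply] using hrevΩ.integral_integral_eq_zero_of_antisymm
    (measurable_uncurry_flux ha hu) (integrable_uncurry_compProd_restrict hΩ hfin ha hu hq hF)
    hantiΩ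

lemma IsReversible.integrable_nonlocalOp (hrev : IsReversible κ ν) (hΩ : MeasurableSet Ω)
    (hfin : ν Ω ≠ ∞) (ha : Measurable fun z : X × X × ℝ => a z.1 z.2.1 z.2.2)
    (hu : AEStronglyMeasurable u (ν.restrict Ω)) (hq : 1 ≤ q)
    (hF : ∫⁻ x in Ω, ∫⁻ y in Ω, ENNReal.ofReal (|a x y (u y - u x)| ^ q) ∂κ x ∂ν < ∞) :
    Integrable (nonlocalOp κ Ω a u) (ν.restrict Ω) := by
  obtain ⟨u', hu', huu'⟩ := hu
  refine (integrable_nonlocalOp_of_measurable hΩ hfin ha hu'.measurable hq ?_).congr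
    (hrev.nonlocalOp_ae_eq hΩ huu').symm
  rwa [← hrev.setLIntegral_setLIntegral_sub_congr hΩ huu' fun x y r => .ofReal (|a x y r| ^ q)]

lemma IsReversible.integral_nonlocalOp_eq_zero (hrev : IsReversible κ ν) (hΩ : MeasurableSet Ω)
    (hfin : ν Ω ≠ ∞) (ha : Measurable fun z : X × X × ℝ => a z.1 z.2.1 z.2.2)
    (hanti : ∀ᵐ x ∂ν, ∀ᵐ y ∂κ x, ∀ r : ℝ, a x y r = - a y x (-r))
    (hu : AEStronglyMeasurable u (ν.restrict Ω)) (hq : 1 ≤ q)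
    (hF : ∫⁻ x in Ω, ∫⁻ y in Ω, ENNReal.ofReal (|a x y (u y - u x)| ^ q) ∂κ x ∂ν < ∞) :
    ∫ x in Ω, nonlocalOp κ Ω a u x ∂ν = 0 := by
  obtain ⟨u', hu', huu'⟩ := hu
  rw [integral_congr_ae (hrev.nonlocalOp_ae_eq hΩ huu')]
  refine hrev.integral_nonlocalOp_eq_zero_of_measurable hΩ hfin ha hanti hu'.measurable hq ?_
  rwa [← hrev.setLIntegral_setLIntegral_sub_congr hΩ huu' fun x y r => .ofReal (|a x y r| ^ q)]

end Nonlocal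

end MassBalance

theorem stmt13_general {X : Type*} [MeasurableSpace X] (m : X → Measure X)
    (hprob : ∀ x, IsProbabilityMeasure (m x)) (hmeas : Measurable m)
    (ν : Measure X)
    (hrev : ∀ f : X → X → ℝ≥0∞, Measurable (Function.uncurry f) →
      ∫⁻ x, ∫⁻ y, f x y ∂(m x) ∂ν = ∫⁻ x, ∫⁻ y, f y x ∂(m x) ∂ν)
    (Ω₁ Ω₂ : Set X) (h1 : MeasurableSet Ω₁) (h2 : MeasurableSet Ω₂)
    (hdisj : Disjoint Ω₁ Ω₂) (hfin : ν (Ω₁ ∪ Ω₂) < ⊤)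
    (p p' : ℝ) (hp : 1 < p) (hp' : 1 / p + 1 / p' = 1)
    (a : X → X → ℝ → ℝ)
    (hameas : Measurable (fun z : X × X × ℝ => a z.1 z.2.1 z.2.2))
    (hasym : ∀ᵐ x ∂ν, ∀ᵐ y ∂(m x), ∀ r : ℝ, a x y r = - a y x (-r))
    (γ β : ℝ → Set ℝ)
    (φ : X → ℝ)
    (u v : X → ℝ)
    (hu : MemLp u (ENNReal.ofReal p) (ν.restrict (Ω₁ ∪ Ω₂)))
    (hv : MemLp v (ENNReal.ofReal p') (ν.restrict (Ω₁ ∪ Ω₂)))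
    (hγu : ∀ᵐ x ∂ν, x ∈ Ω₁ → v x ∈ γ (u x))
    (hβu : ∀ᵐ x ∂ν, x ∈ Ω₂ → v x ∈ β (u x))
    (hF : ∫⁻ x in Ω₁ ∪ Ω₂, ∫⁻ y in Ω₁ ∪ Ω₂,
        ENNReal.ofReal (|a x y (u y - u x)| ^ p') ∂(m x) ∂ν < ⊤)
    (hsol : ∀ᵐ x ∂ν, x ∈ Ω₁ ∪ Ω₂ →
        v x - ∫ y in Ω₁ ∪ Ω₂, a x y (u y - u x) ∂(m x) = φ x) :
    ((ν Ω₁).toReal : EReal) * sInf (graphRange γ)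
        + ((ν Ω₂).toReal : EReal) * sInf (graphRange β)
      ≤ ((∫ x in Ω₁ ∪ Ω₂, φ x ∂ν : ℝ) : EReal) ∧
    ((∫ x in Ω₁ ∪ Ω₂, φ x ∂ν : ℝ) : EReal)
      ≤ ((ν Ω₁).toReal : EReal) * sSup (graphRange γ)
        + ((ν Ω₂).toReal : EReal) * sSup (graphRange β) := by
  let κ : Kernel X X := ⟨m, hmeas⟩
  have : IsMarkovKernel κ := ⟨hprob⟩
  have hrev : IsReversible κ ν := hrev
  have hΩ : MeasurableSet (Ω₁ ∪ Ω₂) := h1.union h2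
  have hp'1 : 1 < p' := (Real.holderConjugate_iff.2 ⟨hp, by simpa only [one_div] using hp'⟩).symm.lt
  have : IsFiniteMeasure (ν.restrict (Ω₁ ∪ Ω₂)) := isFiniteMeasure_restrict.2 hfin.ne
  have hvint : IntegrableOn v (Ω₁ ∪ Ω₂) ν := hv.integrable (by simpa using hp'1.le)
  have hv₁ := hvint.mono_set Set.subset_union_left
  have hv₂ := hvint.mono_set Set.subset_union_right
  have hφ : ∀ᵐ x ∂ν.restrict (Ω₁ ∪ Ω₂), φ x = v x - nonlocalOp κ (Ω₁ ∪ Ω₂) a u x :=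
    ((ae_restrict_iff' hΩ).2 hsol).mono fun x hx => hx.symm
  have hmass : ∫ x in Ω₁ ∪ Ω₂, φ x ∂ν = ∫ x in Ω₁, v x ∂ν + ∫ x in Ω₂, v x ∂ν := by
    rw [integral_congr_ae hφ, integral_sub hvint
      (hrev.integrable_nonlocalOp hΩ hfin.ne hameas hu.1 hp'1.le hF),
      hrev.integral_nonlocalOp_eq_zero hΩ hfin.ne hameas hasym hu.1 hp'1.le hF, sub_zero,
      setIntegral_union hdisj h2 hv₁ hv₂]
  have hν₁ : ν Ω₁ ≠ ∞ := ((measure_mono Set.subset_union_left).trans_lt hfin).ne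
  have hν₂ : ν Ω₂ ≠ ∞ := ((measure_mono Set.subset_union_right).trans_lt hfin).ne
  have hvγ : ∀ᵐ x ∂ν.restrict Ω₁, v x ∈ {z | ∃ s, z ∈ γ s} :=
    (ae_restrict_iff' h1).2 (hγu.mono fun x hx hx₁ => ⟨u x, hx hx₁⟩)
  have hvβ : ∀ᵐ x ∂ν.restrict Ω₂, v x ∈ {z | ∃ s, z ∈ β s} :=
    (ae_restrict_iff' h2).2 (hβu.mono fun x hx hx₂ => ⟨u x, hx hx₂⟩)
  rw [hmass, EReal.coe_add]
  exact ⟨add_le_add (coe_toReal_mul_sInf_le_setIntegral hν₁ hv₁ hvγ)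
      (coe_toReal_mul_sInf_le_setIntegral hν₂ hv₂ hvβ),
    add_le_add (setIntegral_le_coe_toReal_mul_sSup hν₁ hv₁ hvγ)
      (setIntegral_le_coe_toReal_mul_sSup hν₂ hv₂ hvβ)⟩

/-- Mass balance necessary condition: if `[u,v]` solves `(GP_φ)`, then
`ν(Ω₁)·inf Ran(γ) + ν(Ω₂)·inf Ran(β) ≤ ∫_Ω φ dν ≤ ν(Ω₁)·sup Ran(γ) + ν(Ω₂)·sup Ran(β)`
(inequalities in the extended reals). -/
theorem stmt13 {X : Type*} [MeasurableSpace X] (m : X → Measure X)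
    (hprob : ∀ x, IsProbabilityMeasure (m x)) (hmeas : Measurable m)
    (ν : Measure X)
    (hrev : ∀ f : X → X → ℝ≥0∞, Measurable (Function.uncurry f) →
      ∫⁻ x, ∫⁻ y, f x y ∂(m x) ∂ν = ∫⁻ x, ∫⁻ y, f y x ∂(m x) ∂ν)
    (Ω₁ Ω₂ : Set X) (h1 : MeasurableSet Ω₁) (h2 : MeasurableSet Ω₂)
    (hdisj : Disjoint Ω₁ Ω₂) (hfin : ν (Ω₁ ∪ Ω₂) < ⊤)
    (p p' : ℝ) (hp : 1 < p) (hp' : 1 / p + 1 / p' = 1)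
    (a : X → X → ℝ → ℝ)
    (hameas : Measurable (fun z : X × X × ℝ => a z.1 z.2.1 z.2.2))
    (hasym : ∀ᵐ x ∂ν, ∀ᵐ y ∂(m x), ∀ r : ℝ, a x y r = - a y x (-r))
    (γ β : ℝ → Set ℝ) (hγ : MaximalMonotoneGraph γ) (hβ : MaximalMonotoneGraph β)
    (hγ0 : (0 : ℝ) ∈ γ 0) (hβ0 : (0 : ℝ) ∈ β 0)
    (φ : X → ℝ) (hφ : Integrable φ (ν.restrict (Ω₁ ∪ Ω₂)))
    (u v : X → ℝ)
    (hu : MemLp u (ENNReal.ofReal p) (ν.restrict (Ω₁ ∪ Ω₂)))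
    (hv : MemLp v (ENNReal.ofReal p') (ν.restrict (Ω₁ ∪ Ω₂)))
    (hγu : ∀ᵐ x ∂ν, x ∈ Ω₁ → v x ∈ γ (u x))
    (hβu : ∀ᵐ x ∂ν, x ∈ Ω₂ → v x ∈ β (u x))
    (hF : ∫⁻ x in Ω₁ ∪ Ω₂, ∫⁻ y in Ω₁ ∪ Ω₂,
        ENNReal.ofReal (|a x y (u y - u x)| ^ p') ∂(m x) ∂ν < ⊤)
    (hsol : ∀ᵐ x ∂ν, x ∈ Ω₁ ∪ Ω₂ →
        v x - ∫ y in Ω₁ ∪ Ω₂, a x y (u y - u x) ∂(m x) = φ x) :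
    ((ν Ω₁).toReal : EReal) * sInf (graphRange γ)
        + ((ν Ω₂).toReal : EReal) * sInf (graphRange β)
      ≤ ((∫ x in Ω₁ ∪ Ω₂, φ x ∂ν : ℝ) : EReal) ∧
    ((∫ x in Ω₁ ∪ Ω₂, φ x ∂ν : ℝ) : EReal)
      ≤ ((ν Ω₁).toReal : EReal) * sSup (graphRange γ)
        + ((ν Ω₂).toReal : EReal) * sSup (graphRange β) :=
  stmt13_general m hprob hmeas ν hrev Ω₁ Ω₂ h1 h2 hdisj hfin p p' hp hp' a hameas hasym γ β φ u v hu
    hv hγu hβu hF hsol
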